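/- In ℝ⁴ with Lorentzian form ℓ(v,v) = 2v₀v₃ − v₁² − v₂² and the affine maps γ_n(v) = λ(n)v + τ(n), where λ(n) fixes the first and second coordinates as λ(n)v = (v₀ + n v₂ + (n²/2) v₃, v₁, v₂ + n v₃, v₃) and τ(n) = (0, n, 0, 0), one has for every v ∈ ℝ⁴ and n ∈ ℤ: ℓ(γ_n(v) − v, γ_n(v) − v) = −n²(1 + v₃²). In particular, for n ≠ 0, γ_n(v) − v is spacelike for all v, so the quotient ℝ⁴/Γ with Γ = {γ_n : n ∈ ℤ} is causal and the action is free. -/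

import Mathlib

/-! `λ(n)` fixes the last coordinate, so the displacement `γ_n(v) − v` lies in the hyperplane
`w₃ = 0`, on which `ℓ(w,w) = −w₁² − w₂²` is negative semidefinite; its second and third
coordinates are `n` and `n v₃`. -/

noncomputable def ellForm (u v : Fin 4 → ℝ) : ℝ :=
  u 0 * v 3 + u 3 * v 0 - u 1 * v 1 - u 2 * v 2

noncomputable def gammaEx (n : ℤ) (v : Fin 4 → ℝ) : Fin 4 → ℝ :=
  ![v 0 + (n : ℝ) * v 2 + ((n : ℝ) ^ 2 / 2) * v 3, v 1 + (n : ℝ), v 2 + (n : ℝ) * v 3, v 3]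

theorem ellForm_self_of_apply_three_eq_zero {w : Fin 4 → ℝ} (hw : w 3 = 0) :
    ellForm w w = -(w 1 ^ 2 + w 2 ^ 2) := by
  simp only [ellForm, hw]
  ring

theorem gammaEx_sub_self_apply_one (n : ℤ) (v : Fin 4 → ℝ) : (gammaEx n v - v) 1 = n := by
  simp [gammaEx]

theorem gammaEx_sub_self_apply_two (n : ℤ) (v : Fin 4 → ℝ) :
    (gammaEx n v - v) 2 = n * v 3 := by
  simp [gammaEx]

theorem gammaEx_sub_self_apply_three (n : ℤ) (v : Fin 4 → ℝ) : (gammaEx n v - v) 3 = 0 := by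
  simp [gammaEx]

theorem ellForm_gammaEx_sub_self (n : ℤ) (v : Fin 4 → ℝ) :
    ellForm (gammaEx n v - v) (gammaEx n v - v) = -(n : ℝ) ^ 2 * (1 + v 3 ^ 2) := by
  rw [ellForm_self_of_apply_three_eq_zero (gammaEx_sub_self_apply_three n v),
    gammaEx_sub_self_apply_one, gammaEx_sub_self_apply_two]
  ring

theorem ellForm_gammaEx_sub_self_neg {n : ℤ} (hn : n ≠ 0) (v : Fin 4 → ℝ) :
    ellForm (gammaEx n v - v) (gammaEx n v - v) < 0 := by
  rw [ellForm_gammaEx_sub_self, neg_mul, neg_neg_iff_pos]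
  positivity

theorem gammaEx_ne_self {n : ℤ} (hn : n ≠ 0) (v : Fin 4 → ℝ) : gammaEx n v ≠ v := by
  intro h
  have h1 := gammaEx_sub_self_apply_one n v
  rw [h, sub_self, Pi.zero_apply, eq_comm, Int.cast_eq_zero] at h1
  exact hn h1

/-- Example 2.3, formula (12): for every `v ∈ ℝ⁴` and `n ∈ ℤ`,
`ℓ(γ_n(v) − v, γ_n(v) − v) = −n²(1 + v₃²)`; in particular for `n ≠ 0` the displacement
`γ_n(v) − v` is spacelike and `γ_n(v) ≠ v`, so the action of `Γ = {γ_n}` is free and the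
quotient `ℝ⁴/Γ` is causal. -/
theorem example_displacement_spacelike (v : Fin 4 → ℝ) (n : ℤ) :
    ellForm (gammaEx n v - v) (gammaEx n v - v) = -(n : ℝ) ^ 2 * (1 + (v 3) ^ 2) ∧
      (n ≠ 0 →
        ellForm (gammaEx n v - v) (gammaEx n v - v) < 0 ∧ gammaEx n v ≠ v) :=
  ⟨ellForm_gammaEx_sub_self n v, fun hn => ⟨ellForm_gammaEx_sub_self_neg hn v, gammaEx_ne_self hn v⟩⟩
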